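/- arXiv:1906.03806 — 3 statements merged into one kernel-verified Lean document; each statement's English description precedes it below -/
import Mathlib

section
/- Let n ≥ 0 and d ≥ 2 be integers and let f ∈ ℂ[x₀,…,x_{n+1}] be an irreducible homogeneous polynomial of degree d all of whose coefficients are real. Then for every nonzero vector v ∈ ℝ^{n+2} at least one of the following holds: (i) f(ι(v)) = 0; (ii) there exist u₁, u₂ ∈ ℝ^{n+2}, linearly independent over ℝ, with f(ι(u₁)) = f(ι(u₂)) = 0 and v ∈ span_ℝ{u₁, u₂}; (iii) there exists w ∈ ℂ^{n+2} with f(w) = 0 such that w and σ(w) are ℂ-linearly independent and ι(v) ∈ span_ℂ{w, σ(w)}. (In the language of the paper: every real point of ℙ^{n+1}(ℝ) has label (0,1), (0,2) or (1,0) with respect to the hypersurface X = {f = 0}.) -/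
/-- Coordinatewise complex conjugation on `ℂ^m`. -/
def conjPi {m : ℕ} (w : Fin m → ℂ) : Fin m → ℂ := fun i => (starRingEnd ℂ) (w i)

/-- The natural inclusion `ℝ^m → ℂ^m`. -/
def inclPi {m : ℕ} (v : Fin m → ℝ) : Fin m → ℂ := fun i => (v i : ℂ)

/-!
Suppose `v` has none of the three labels, so `A := f(v) ≠ 0`. For real `u` independent of
`v`, `q(t) = f(v + t u)` has degree at most `d`. A non-real root of `q` gives a conjugate pair
of points of `X` (label (1,0)); two distinct real roots, or one real root together with
`f(u) = 0`, give two real points (label (0,2)). So `q` is constant or `c (t - λ)^d`, and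
comparing its coefficients of `1`, `t` and `t^d` gives `d^d A^(d-1) f(u) = L(u)^d` for the
tangent form `L = ∑ ∂ᵢf(v) xᵢ`. By Euler's identity and homogeneity this also holds on the line
`ℝ v`, hence on all of `ℝ^(n+2)`, hence as polynomials: `f` is associated to `L^d`, which is
not irreducible.
-/

section PairChangeOfBasis

variable {K M : Type*} [Field K] [AddCommGroup M] [Module K M]

theorem LinearIndependent.pair_smul_add_smul {x y : M} (h : LinearIndependent K ![x, y])
    {a b c d : K} (hdet : a * d - b * c ≠ 0) :
    LinearIndependent K ![a • x + b • y, c • x + d • y] := by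
  rw [LinearIndependent.pair_iff] at h ⊢
  intro s t hst
  have hxy := h (s * a + t * c) (s * b + t * d) (by rw [← hst]; module)
  refine ⟨(mul_eq_zero.mp ?_).resolve_right hdet, (mul_eq_zero.mp ?_).resolve_right hdet⟩
  · linear_combination d * hxy.1 - c * hxy.2
  · linear_combination a * hxy.2 - b * hxy.1

theorem mem_span_pair_smul_add_smul (x y : M) {a b c d : K} (hdet : a * d - b * c ≠ 0) :
    x ∈ Submodule.span K {a • x + b • y, c • x + d • y} := by
  rw [Submodule.mem_span_pair]
  refine ⟨d * (a * d - b * c)⁻¹, -b * (a * d - b * c)⁻¹, ?_⟩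
  match_scalars
  · linear_combination mul_inv_cancel₀ hdet
  · ring

end PairChangeOfBasis

namespace Polynomial

theorem coeff_one_pow_of_eq_C_mul_X_sub_C_pow {R : Type*} [CommRing R] {q : R[X]} {c a : R}
    {d : ℕ} (hd : d ≠ 0) (hq : q = C c * (X - C a) ^ d) :
    q.coeff 1 ^ d = (d : R) ^ d * q.coeff 0 ^ (d - 1) * q.coeff d := by
  obtain ⟨k, rfl⟩ := Nat.exists_eq_add_one_of_ne_zero hd
  have hcoeff (j : ℕ) : q.coeff j = c * ((-a) ^ (k + 1 - j) * ((k + 1).choose j : R)) := by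
    rw [hq, coeff_C_mul, sub_eq_add_neg, ← C_neg, coeff_X_add_C_pow]
  simp only [hcoeff, Nat.choose_zero_right, Nat.choose_one_right, Nat.choose_self, Nat.sub_zero,
    Nat.add_sub_cancel, Nat.sub_self, Nat.cast_one]
  ring

variable {K : Type*} [Field K] [IsAlgClosed K]

theorem eq_C_leadingCoeff_mul_X_sub_C_pow {q : K[X]} {a : K} (h : ∀ x ∈ q.roots, x = a) :
    q = C q.leadingCoeff * (X - C a) ^ q.natDegree := by
  have hcard : Multiset.card q.roots = q.natDegree := IsAlgClosed.card_roots_eq_natDegree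
  conv_lhs => rw [← C_leadingCoeff_mul_prod_multiset_X_sub_C hcard]
  rw [Multiset.eq_replicate.mpr ⟨hcard, h⟩, Multiset.map_replicate, Multiset.prod_replicate]

theorem coeff_one_pow_of_roots_subsingleton {q : K[X]} {d : ℕ} (hd : d ≠ 0)
    (hdeg : q.natDegree ≤ d) (hroots : ∀ x ∈ q.roots, ∀ y ∈ q.roots, x = y)
    (htop : ∀ x ∈ q.roots, q.coeff d ≠ 0) :
    q.coeff 1 ^ d = (d : K) ^ d * q.coeff 0 ^ (d - 1) * q.coeff d := by
  rcases Multiset.empty_or_exists_mem q.roots with h0 | ⟨a, ha⟩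
  · have hq0 : q.natDegree = 0 := by
      rw [← IsAlgClosed.card_roots_eq_natDegree, h0, Multiset.card_zero]
    rw [coeff_eq_zero_of_natDegree_lt (by omega : q.natDegree < 1),
      coeff_eq_zero_of_natDegree_lt (by omega : q.natDegree < d), zero_pow hd, mul_zero]
  · have hnat : q.natDegree = d := le_antisymm hdeg (le_natDegree_of_ne_zero (htop a ha))
    exact coeff_one_pow_of_eq_C_mul_X_sub_C_pow hd
      (hnat ▸ eq_C_leadingCoeff_mul_X_sub_C_pow fun x hx => hroots x hx a ha)

end Polynomial

theorem Finsupp.card_toMultiset_eq_degree {σ : Type*} (m : σ →₀ ℕ) :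
    Multiset.card (Finsupp.toMultiset m) = m.degree :=
  Finsupp.card_toMultiset m

namespace MvPolynomial

open Polynomial

variable {R σ : Type*} [CommSemiring R]

theorem aeval_monomial_eq_multiset_prod (g : σ → R[X]) (m : σ →₀ ℕ) (r : R) :
    aeval g (monomial m r) = Polynomial.C r * ((Finsupp.toMultiset m).map g).prod := by
  rw [aeval_monomial, Finsupp.toMultiset_map, Finsupp.prod_toMultiset,
    Finsupp.prod_mapDomain_index (fun _ => pow_zero _) (fun _ _ _ => pow_add _ _ _)]
  rfl

theorem eval_monomial_eq_multiset_prod (x : σ → R) (m : σ →₀ ℕ) (r : R) :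
    eval x (monomial m r) = r * ((Finsupp.toMultiset m).map x).prod := by
  rw [eval_monomial, Finsupp.toMultiset_map, Finsupp.prod_toMultiset,
    Finsupp.prod_mapDomain_index (fun _ => pow_zero _) (fun _ _ _ => pow_add _ _ _)]

theorem IsHomogeneous.eval_smul {f : MvPolynomial σ R} {d : ℕ} (hf : f.IsHomogeneous d) (a : R)
    (x : σ → R) : eval (a • x) f = a ^ d * eval x f := by
  rw [f.as_sum, map_sum, map_sum, Finset.mul_sum]
  refine Finset.sum_congr rfl fun m hm => ?_
  have hd : d = Multiset.card (Finsupp.toMultiset m) :=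
    (hf.degree_eq_sum_deg_support hm).trans (Finsupp.card_toMultiset_eq_degree m).symm
  rw [eval_monomial_eq_multiset_prod, eval_monomial_eq_multiset_prod, hd]
  simp only [Pi.smul_def, smul_eq_mul, Multiset.prod_map_mul, Multiset.map_const',
    Multiset.prod_replicate]
  ring

theorem derivative_aeval [Fintype σ] (g : σ → R[X]) (f : MvPolynomial σ R) :
    derivative (aeval g f) = ∑ i, aeval g (pderiv i f) * derivative (g i) := by
  classical
  induction f using MvPolynomial.induction_on with
  | C a => simp
  | add p q hp hq => simp only [map_add, hp, hq, add_mul, Finset.sum_add_distrib]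
  | mul_X p j hp =>
    simp only [map_mul, aeval_X, derivative_mul, hp, Finset.sum_mul, Derivation.leibniz,
      pderiv_X, Pi.single_apply, smul_eq_mul, mul_ite, mul_one, mul_zero, map_add,
      apply_ite (aeval g), map_zero, add_mul, ite_mul, zero_mul, Finset.sum_add_distrib,
      Finset.sum_ite_eq, Finset.mem_univ, ↓reduceIte]
    rw [add_comm]
    exact congrArg _ (Finset.sum_congr rfl fun i _ => by ring)

section DegreeOneSubstitution

variable {g : σ → R[X]} (hg : ∀ i, (g i).natDegree ≤ 1)
include hg

theorem natDegree_aeval_monomial_le (m : σ →₀ ℕ) (r : R) :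
    (aeval g (monomial m r)).natDegree ≤ m.degree := by
  rw [aeval_monomial_eq_multiset_prod, ← Finsupp.card_toMultiset_eq_degree]
  refine (natDegree_C_mul_le _ _).trans ((natDegree_multiset_prod_le _).trans ?_)
  rw [Multiset.map_map, Function.comp_def]
  simpa only [Multiset.map_const', Multiset.sum_replicate, smul_eq_mul, mul_one] using
    Multiset.sum_map_le_sum_map (fun i => (g i).natDegree) (fun _ => 1) (fun i _ => hg i)

theorem coeff_aeval_monomial (m : σ →₀ ℕ) (r : R) :
    (aeval g (monomial m r)).coeff m.degree = eval (fun i => (g i).coeff 1) (monomial m r) := by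
  have h := coeff_multiset_prod_of_natDegree_le ((Finsupp.toMultiset m).map g) 1
    (by simpa using fun i _ => hg i)
  rw [Multiset.card_map, mul_one, Finsupp.card_toMultiset_eq_degree, Multiset.map_map] at h
  rw [aeval_monomial_eq_multiset_prod, Polynomial.coeff_C_mul, h, eval_monomial_eq_multiset_prod]
  rfl

theorem IsHomogeneous.natDegree_aeval_le {f : MvPolynomial σ R} {d : ℕ}
    (hf : f.IsHomogeneous d) : (MvPolynomial.aeval g f).natDegree ≤ d := by
  rw [f.as_sum, map_sum]
  refine natDegree_sum_le_of_forall_le _ _ fun m hm => ?_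
  exact (hf.degree_eq_sum_deg_support hm).symm ▸ natDegree_aeval_monomial_le hg m _

theorem IsHomogeneous.coeff_aeval {f : MvPolynomial σ R} {d : ℕ} (hf : f.IsHomogeneous d) :
    (MvPolynomial.aeval g f).coeff d = eval (fun i => (g i).coeff 1) f := by
  rw [f.as_sum, map_sum, finsetSum_coeff, map_sum]
  refine Finset.sum_congr rfl fun m hm => ?_
  exact (hf.degree_eq_sum_deg_support hm).symm ▸ coeff_aeval_monomial hg m _

end DegreeOneSubstitution

noncomputable def restrictLine (f : MvPolynomial σ R) (V U : σ → R) : R[X] :=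
  aeval (fun i => Polynomial.C (V i) + Polynomial.C (U i) * Polynomial.X) f

theorem eval_restrictLine (f : MvPolynomial σ R) (V U : σ → R) (t : R) :
    (restrictLine f V U).eval t = eval (V + t • U) f := by
  rw [restrictLine, ← Polynomial.coe_aeval_eq_eval, comp_aeval_apply, ← aeval_eq_eval]
  congr 2
  funext i
  simp only [map_add, map_mul, Polynomial.aeval_C, Polynomial.aeval_X, Algebra.algebraMap_self,
    RingHom.id_apply, Pi.add_apply, Pi.smul_apply, smul_eq_mul, mul_comm]

theorem coeff_zero_restrictLine (f : MvPolynomial σ R) (V U : σ → R) :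
    (restrictLine f V U).coeff 0 = eval V f := by
  rw [coeff_zero_eq_eval_zero, eval_restrictLine, zero_smul, add_zero]

theorem IsHomogeneous.natDegree_restrictLine_le {f : MvPolynomial σ R} {d : ℕ}
    (hf : f.IsHomogeneous d) (V U : σ → R) : (restrictLine f V U).natDegree ≤ d :=
  hf.natDegree_aeval_le fun _ => by compute_degree

theorem IsHomogeneous.coeff_restrictLine {f : MvPolynomial σ R} {d : ℕ}
    (hf : f.IsHomogeneous d) (V U : σ → R) : (restrictLine f V U).coeff d = eval U f := by
  rw [restrictLine, hf.coeff_aeval fun _ => by compute_degree]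
  simp

variable [Fintype σ]

noncomputable def tangentForm (f : MvPolynomial σ R) (V : σ → R) : MvPolynomial σ R :=
  ∑ i, C (eval V (pderiv i f)) * X i

theorem isHomogeneous_tangentForm (f : MvPolynomial σ R) (V : σ → R) :
    (tangentForm f V).IsHomogeneous 1 :=
  IsHomogeneous.sum _ _ _ fun i _ => isHomogeneous_C_mul_X _ i

theorem eval_tangentForm (f : MvPolynomial σ R) (V W : σ → R) :
    eval W (tangentForm f V) = ∑ i, eval V (pderiv i f) * W i := by
  simp [tangentForm]

theorem IsHomogeneous.eval_tangentForm_self {f : MvPolynomial σ R} {d : ℕ}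
    (hf : f.IsHomogeneous d) (V : σ → R) : eval V (tangentForm f V) = d * eval V f := by
  have h := congrArg (eval V) hf.sum_X_mul_pderiv
  simp only [map_sum, map_mul, eval_X, nsmul_eq_mul, map_natCast] at h
  rw [eval_tangentForm, ← h]
  exact Finset.sum_congr rfl fun i _ => mul_comm _ _

theorem coeff_one_restrictLine (f : MvPolynomial σ R) (V U : σ → R) :
    (restrictLine f V U).coeff 1 = eval U (tangentForm f V) := by
  have h := congrArg (Polynomial.coeff · 0) (derivative_aeval (fun i =>
    Polynomial.C (V i) + Polynomial.C (U i) * Polynomial.X) f)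
  simp only [coeff_derivative, Nat.cast_zero, zero_add, mul_one] at h
  rw [restrictLine, h, eval_tangentForm, finsetSum_coeff]
  refine Finset.sum_congr rfl fun i _ => ?_
  simp only [derivative_add, derivative_C, derivative_mul, derivative_X, zero_add, zero_mul,
    mul_one, coeff_mul_C]
  exact congrArg (· * U i) (coeff_zero_restrictLine (pderiv i f) V U)

end MvPolynomial
section RealPoints

open MvPolynomial

variable {m : ℕ}

@[simp]
theorem inclPi_add (v u : Fin m → ℝ) : inclPi (v + u) = inclPi v + inclPi u :=
  funext fun i => Complex.ofReal_add (v i) (u i)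

@[simp]
theorem inclPi_smul (r : ℝ) (v : Fin m → ℝ) : inclPi (r • v) = (r : ℂ) • inclPi v :=
  funext fun i => Complex.ofReal_mul r (v i)

@[simp]
theorem inclPi_zero : inclPi (0 : Fin m → ℝ) = 0 :=
  funext fun _ => Complex.ofReal_zero

@[simp]
theorem conjPi_add (w z : Fin m → ℂ) : conjPi (w + z) = conjPi w + conjPi z :=
  funext fun i => map_add _ (w i) (z i)

@[simp]
theorem conjPi_smul (c : ℂ) (w : Fin m → ℂ) :
    conjPi (c • w) = starRingEnd ℂ c • conjPi w :=
  funext fun i => map_mul _ c (w i)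

@[simp]
theorem conjPi_inclPi (v : Fin m → ℝ) : conjPi (inclPi v) = inclPi v :=
  funext fun i => Complex.conj_ofReal (v i)

theorem LinearIndependent.inclPi_pair {v u : Fin m → ℝ} (h : LinearIndependent ℝ ![v, u]) :
    LinearIndependent ℂ ![inclPi v, inclPi u] := by
  rw [LinearIndependent.pair_iff] at h ⊢
  intro s t hst
  have hre := h s.re t.re (funext fun i => by
    simpa [inclPi] using congrArg Complex.re (congrFun hst i))
  have him := h s.im t.im (funext fun i => by
    simpa [inclPi] using congrArg Complex.im (congrFun hst i))
  exact ⟨Complex.ext hre.1 him.1, Complex.ext hre.2 him.2⟩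

theorem eq_zero_of_forall_eval_inclPi_eq_zero {p : MvPolynomial (Fin m) ℂ}
    (h : ∀ u : Fin m → ℝ, eval (inclPi u) p = 0) : p = 0 := by
  refine funext_set (fun _ => Set.range Complex.ofReal)
    (fun _ => Set.infinite_range_of_injective Complex.ofReal_injective) fun x hx => ?_
  have hx' : x = inclPi fun i => (x i).re := funext fun i => by
    obtain ⟨r, hr⟩ := hx i trivial
    simp [inclPi, ← hr]
  rw [hx', h, map_zero]

def HasLabelZeroTwo (f : MvPolynomial (Fin m) ℂ) (v : Fin m → ℝ) : Prop :=
  ∃ u₁ u₂ : Fin m → ℝ, LinearIndependent ℝ ![u₁, u₂] ∧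
    eval (inclPi u₁) f = 0 ∧ eval (inclPi u₂) f = 0 ∧ v ∈ Submodule.span ℝ {u₁, u₂}

def HasLabelOneZero (f : MvPolynomial (Fin m) ℂ) (v : Fin m → ℝ) : Prop :=
  ∃ w : Fin m → ℂ, eval w f = 0 ∧ LinearIndependent ℂ ![w, conjPi w] ∧
    inclPi v ∈ Submodule.span ℂ {w, conjPi w}

variable {f : MvPolynomial (Fin m) ℂ} {v u : Fin m → ℝ}

theorem hasLabelOneZero_of_eval_add_smul_eq_zero (hvu : LinearIndependent ℝ ![v, u]) {z : ℂ}
    (hz : z.im ≠ 0) (hf : eval (inclPi v + z • inclPi u) f = 0) : HasLabelOneZero f v := by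
  have hdet : 1 * starRingEnd ℂ z - z * 1 ≠ 0 := by
    rw [one_mul, mul_one, sub_ne_zero]
    exact fun h => hz (Complex.conj_eq_iff_im.mp h)
  refine ⟨inclPi v + z • inclPi u, hf, ?_, ?_⟩ <;>
    simp only [conjPi_add, conjPi_smul, conjPi_inclPi]
  · simpa only [one_smul] using hvu.inclPi_pair.pair_smul_add_smul hdet
  · simpa only [one_smul] using mem_span_pair_smul_add_smul (inclPi v) (inclPi u) hdet

theorem hasLabelZeroTwo_of_eval_add_smul_eq_zero (hvu : LinearIndependent ℝ ![v, u]) {r s : ℝ}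
    (hrs : r ≠ s) (hr : eval (inclPi (v + r • u)) f = 0) (hs : eval (inclPi (v + s • u)) f = 0) :
    HasLabelZeroTwo f v := by
  have hdet : 1 * s - r * 1 ≠ 0 := by rw [one_mul, mul_one, sub_ne_zero]; exact hrs.symm
  refine ⟨v + r • u, v + s • u, ?_, hr, hs, ?_⟩
  · simpa only [one_smul] using hvu.pair_smul_add_smul hdet
  · simpa only [one_smul] using mem_span_pair_smul_add_smul v u hdet

theorem hasLabelZeroTwo_of_eval_add_smul_eq_zero_of_eval_eq_zero
    (hvu : LinearIndependent ℝ ![v, u]) {r : ℝ} (hr : eval (inclPi (v + r • u)) f = 0)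
    (hu : eval (inclPi u) f = 0) : HasLabelZeroTwo f v := by
  have hdet : (0 : ℝ) * r - 1 * 1 ≠ 0 := by norm_num
  refine ⟨u, v + r • u, ?_, hu, hr, ?_⟩
  · simpa only [zero_smul, zero_add, one_smul] using hvu.pair_smul_add_smul hdet
  · simpa only [zero_smul, zero_add, one_smul] using mem_span_pair_smul_add_smul v u hdet

end RealPoints

section Hypersurface

open MvPolynomial

variable {m d : ℕ} {f : MvPolynomial (Fin m) ℂ} {v : Fin m → ℝ}

theorem eval_tangentForm_pow_of_not_hasLabel (hf : f.IsHomogeneous d) (hd : d ≠ 0)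
    (h02 : ¬HasLabelZeroTwo f v) (h10 : ¬HasLabelOneZero f v) {u : Fin m → ℝ}
    (hvu : LinearIndependent ℝ ![v, u]) :
    eval (inclPi u) (tangentForm f (inclPi v)) ^ d =
      (d : ℂ) ^ d * eval (inclPi v) f ^ (d - 1) * eval (inclPi u) f := by
  set q := restrictLine f (inclPi v) (inclPi u)
  have hroot : ∀ x ∈ q.roots, eval (inclPi v + x • inclPi u) f = 0 := fun x hx => by
    rw [← eval_restrictLine]
    exact (Polynomial.mem_roots'.mp hx).2
  have hreal : ∀ x ∈ q.roots, ((x.re : ℝ) : ℂ) = x := fun x hx => by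
    refine Complex.ext rfl (Eq.symm ?_)
    by_contra him
    exact h10 (hasLabelOneZero_of_eval_add_smul_eq_zero hvu him (hroot x hx))
  have hroot_real : ∀ x ∈ q.roots, eval (inclPi (v + x.re • u)) f = 0 := fun x hx => by
    rw [inclPi_add, inclPi_smul, hreal x hx]
    exact hroot x hx
  rw [← coeff_one_restrictLine, ← coeff_zero_restrictLine _ _ (inclPi u),
    ← hf.coeff_restrictLine (inclPi v)]
  refine Polynomial.coeff_one_pow_of_roots_subsingleton hd (hf.natDegree_restrictLine_le _ _)
    (fun x hx y hy => ?_) (fun x hx hu => ?_)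
  · by_contra hxy
    have hre : x.re ≠ y.re := fun h => hxy (by rw [← hreal x hx, ← hreal y hy, h])
    exact h02 <|
      hasLabelZeroTwo_of_eval_add_smul_eq_zero hvu hre (hroot_real x hx) (hroot_real y hy)
  · rw [hf.coeff_restrictLine] at hu
    exact h02 (hasLabelZeroTwo_of_eval_add_smul_eq_zero_of_eval_eq_zero hvu (hroot_real x hx) hu)

theorem C_mul_eq_tangentForm_pow (hf : f.IsHomogeneous d) (hd : d ≠ 0)
    (hA : eval (inclPi v) f ≠ 0)
    (hline : ∀ u, LinearIndependent ℝ ![v, u] → eval (inclPi u) (tangentForm f (inclPi v)) ^ d =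
      (d : ℂ) ^ d * eval (inclPi v) f ^ (d - 1) * eval (inclPi u) f) :
    C ((d : ℂ) ^ d * eval (inclPi v) f ^ (d - 1)) * f = tangentForm f (inclPi v) ^ d := by
  have hv : v ≠ 0 := by
    rintro rfl
    apply hA
    simpa [hd] using hf.eval_smul 0 0
  set G := C ((d : ℂ) ^ d * eval (inclPi v) f ^ (d - 1)) * f - tangentForm f (inclPi v) ^ d
  have hG : G.IsHomogeneous d := by
    have hpow := (isHomogeneous_tangentForm f (inclPi v)).pow d
    rw [one_mul] at hpow
    exact (hf.C_mul _).sub hpow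
  have hGv : eval (inclPi v) G = 0 := by
    simp only [G, map_sub, map_mul, eval_C, map_pow, hf.eval_tangentForm_self]
    rw [mul_assoc, pow_sub_one_mul hd, mul_pow, sub_self]
  rw [← sub_eq_zero]
  refine eq_zero_of_forall_eval_inclPi_eq_zero fun u => ?_
  by_cases hvu : LinearIndependent ℝ ![v, u]
  · simp [hline u hvu]
  · obtain ⟨t, rfl⟩ : ∃ t : ℝ, t • v = u := by
      simpa [LinearIndependent.pair_iff' hv] using hvu
    rw [inclPi_smul, hG.eval_smul, hGv, mul_zero]

end Hypersurface

theorem real_point_of_hypersurface_has_label_general (n d : ℕ) (hd : 2 ≤ d)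
    (f : MvPolynomial (Fin (n + 2)) ℂ) (hirr : Irreducible f)
    (hhom : f.IsHomogeneous d)
    (v : Fin (n + 2) → ℝ) :
    MvPolynomial.eval (inclPi v) f = 0 ∨
    (∃ u₁ u₂ : Fin (n + 2) → ℝ, LinearIndependent ℝ ![u₁, u₂] ∧
      MvPolynomial.eval (inclPi u₁) f = 0 ∧ MvPolynomial.eval (inclPi u₂) f = 0 ∧
      v ∈ Submodule.span ℝ {u₁, u₂}) ∨
    (∃ w : Fin (n + 2) → ℂ, MvPolynomial.eval w f = 0 ∧
      LinearIndependent ℂ ![w, conjPi w] ∧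
      inclPi v ∈ Submodule.span ℂ {w, conjPi w}) := by
  by_contra h
  simp only [not_or] at h
  obtain ⟨hA, h02, h10⟩ := h
  have hd0 : d ≠ 0 := by omega
  have hpow := C_mul_eq_tangentForm_pow hhom hd0 hA fun _ hvu =>
    eval_tangentForm_pow_of_not_hasLabel hhom hd0 h02 h10 hvu
  have hunit : IsUnit (MvPolynomial.C ((d : ℂ) ^ d * MvPolynomial.eval (inclPi v) f ^ (d - 1)) :
      MvPolynomial (Fin (n + 2)) ℂ) :=
    (Ne.isUnit (by simp [hd0, hA])).map MvPolynomial.C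
  exact not_irreducible_pow (show d ≠ 1 by omega)
    (hpow ▸ (associated_unit_mul_left f _ hunit).symm.irreducible hirr)

theorem real_point_of_hypersurface_has_label (n d : ℕ) (hd : 2 ≤ d)
    (f : MvPolynomial (Fin (n + 2)) ℂ) (hirr : Irreducible f)
    (hhom : f.IsHomogeneous d) (hreal : ∀ μ, (f.coeff μ).im = 0)
    (v : Fin (n + 2) → ℝ) (hv : v ≠ 0) :
    MvPolynomial.eval (inclPi v) f = 0 ∨
    (∃ u₁ u₂ : Fin (n + 2) → ℝ, LinearIndependent ℝ ![u₁, u₂] ∧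
      MvPolynomial.eval (inclPi u₁) f = 0 ∧ MvPolynomial.eval (inclPi u₂) f = 0 ∧
      v ∈ Submodule.span ℝ {u₁, u₂}) ∨
    (∃ w : Fin (n + 2) → ℂ, MvPolynomial.eval w f = 0 ∧
      LinearIndependent ℂ ![w, conjPi w] ∧
      inclPi v ∈ Submodule.span ℂ {w, conjPi w}) :=
  real_point_of_hypersurface_has_label_general n d hd f hirr hhom v
end

section
/- Let K be a field, V a K-vector space, x ≥ 1 an integer, and X ⊆ V a set such that every finite subset of X with at most 2x elements is K-linearly independent. Let S₁, S₂ be finite subsets of X with |S₁| ≤ x and |S₂| ≤ x, and let q ∈ V be such that q ∈ span_K S₁, q ∈ span_K S₂, q ∉ span_K S' for every proper subset S' ⊊ S₁, and q ∉ span_K S' for every proper subset S' ⊊ S₂. Then S₁ = S₂. (Uniqueness of the minimal additive decomposition when all sets of twice the cardinality are linearly independent.) -/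
open Submodule

lemma aux_subset_of_minimal {K : Type*} {V : Type*} [Field K]
    [AddCommGroup V] [Module K V] [DecidableEq V]
    (S₁ S₂ : Finset V)
    (hind : LinearIndependent K (fun v : ((S₁ ∪ S₂ : Finset V) : Set V) => (v : V)))
    (q : V)
    (hq₁ : q ∈ Submodule.span K (S₁ : Set V))
    (hq₂ : q ∈ Submodule.span K (S₂ : Set V))
    (hmin₁ : ∀ S' : Finset V, S' ⊂ S₁ → q ∉ Submodule.span K (S' : Set V)) :
    S₁ ⊆ S₂ := by
  classical
  set T : Finset V := S₁ ∪ S₂ with hT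
  -- disjointness of spans of disjoint subsets of T
  have key : ∀ A B : Set V, A ⊆ (T : Set V) → B ⊆ (T : Set V) → Disjoint A B →
      Disjoint (span K A) (span K B) := by
    intro A B hA hB hAB
    have := hind.disjoint_span_image (s := (Subtype.val ⁻¹' A : Set (T : Set V)))
      (t := (Subtype.val ⁻¹' B : Set (T : Set V)))
      (by exact Disjoint.preimage _ hAB)
    rwa [Subtype.image_preimage_coe, Subtype.image_preimage_coe,
      Set.inter_eq_right.mpr hA, Set.inter_eq_right.mpr hB] at this
  -- decompose q
  have hsplit : (S₁ : Set V) = ((S₁ ∩ S₂ : Finset V) : Set V) ∪ ((S₁ \ S₂ : Finset V) : Set V) := by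
    simp [Finset.coe_inter, Finset.coe_sdiff, Set.inter_union_diff]
  rw [hsplit, span_union, mem_sup] at hq₁
  obtain ⟨a, ha, b, hb, hab⟩ := hq₁
  have ha₂ : a ∈ span K (S₂ : Set V) := by
    refine span_mono ?_ ha
    simp [Finset.coe_inter]
  have hb₂ : b ∈ span K (S₂ : Set V) := by
    have : b = q - a := by rw [← hab]; abel
    rw [this]; exact sub_mem hq₂ ha₂
  have hdisj : Disjoint (span K (S₂ : Set V)) (span K ((S₁ \ S₂ : Finset V) : Set V)) := by
    apply key
    · intro v hv; simp [hT]; tauto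
    · intro v hv; simp only [Finset.coe_sdiff] at hv
      simp [hT]; exact Or.inl hv.1
    · rw [Finset.coe_sdiff]; exact Set.disjoint_sdiff_right.mono_left le_rfl
  have hb0 : b = 0 := by
    exact (Submodule.disjoint_def.mp hdisj) b hb₂ hb
  have hqmem : q ∈ span K ((S₁ ∩ S₂ : Finset V) : Set V) := by
    rw [← hab, hb0, add_zero]; exact ha
  -- minimality forces S₁ ∩ S₂ = S₁
  by_contra hns
  have hss : S₁ ∩ S₂ ⊂ S₁ := by
    constructor
    · exact Finset.inter_subset_left
    · intro h
      exact hns (fun v hv => (Finset.mem_inter.mp (h hv)).2)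
  exact hmin₁ _ hss hqmem

theorem unique_minimal_decomposition {K : Type*} {V : Type*} [Field K]
    [AddCommGroup V] [Module K V] (x : ℕ) (hx : 1 ≤ x) (X : Set V)
    (hX : ∀ s : Finset V, (s : Set V) ⊆ X → s.card ≤ 2 * x →
      LinearIndependent K (fun v : (s : Set V) => (v : V)))
    (S₁ S₂ : Finset V) (hS₁X : (S₁ : Set V) ⊆ X) (hS₂X : (S₂ : Set V) ⊆ X)
    (hcard₁ : S₁.card ≤ x) (hcard₂ : S₂.card ≤ x) (q : V)
    (hq₁ : q ∈ Submodule.span K (S₁ : Set V))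
    (hq₂ : q ∈ Submodule.span K (S₂ : Set V))
    (hmin₁ : ∀ S' : Finset V, S' ⊂ S₁ → q ∉ Submodule.span K (S' : Set V))
    (hmin₂ : ∀ S' : Finset V, S' ⊂ S₂ → q ∉ Submodule.span K (S' : Set V)) :
    S₁ = S₂ := by
  classical
  have hind : LinearIndependent K (fun v : ((S₁ ∪ S₂ : Finset V) : Set V) => (v : V)) := by
    apply hX
    · rw [Finset.coe_union]; exact Set.union_subset hS₁X hS₂X
    · calc (S₁ ∪ S₂).card ≤ S₁.card + S₂.card := Finset.card_union_le _ _
        _ ≤ x + x := Nat.add_le_add hcard₁ hcard₂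
        _ = 2 * x := (two_mul x).symm
  have hind' : LinearIndependent K (fun v : ((S₂ ∪ S₁ : Finset V) : Set V) => (v : V)) := by
    rwa [Finset.union_comm]
  exact le_antisymm (aux_subset_of_minimal S₁ S₂ hind q hq₁ hq₂ hmin₁)
    (aux_subset_of_minimal S₂ S₁ hind' q hq₂ hq₁ hmin₂)
end

section
/- Let m ≥ 1, x ≥ 1, and let X ⊆ ℂ^m be a set with σ(X) = X such that every finite subset of X with at most 2x elements is ℂ-linearly independent. Let v ∈ ℝ^m and let S ⊆ X be a finite set with |S| ≤ x such that ι(v) ∈ span_ℂ S and ι(v) ∉ span_ℂ S' for every proper subset S' ⊊ S. Then σ(S) = S. (The unique minimal decomposition of a real point is invariant under complex conjugation.) -/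
open Submodule Finsupp in
theorem LinearIndepOn.span_image_inter_eq {R M ι : Type*} [Semiring R] [AddCommMonoid M]
    [Module R M] {v : ι → M} {u s t : Set ι} (hu : LinearIndepOn R v u) (hs : s ⊆ u)
    (ht : t ⊆ u) : span R (v '' (s ∩ t)) = span R (v '' s) ⊓ span R (v '' t) := by
  refine le_antisymm (le_inf (span_mono (Set.image_mono Set.inter_subset_left))
    (span_mono (Set.image_mono Set.inter_subset_right))) ?_
  rintro x ⟨hxs, hxt⟩
  obtain ⟨f, hf, rfl⟩ := (mem_span_image_iff_linearCombination R).mp hxs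
  obtain ⟨g, hg, hgf⟩ := (mem_span_image_iff_linearCombination R).mp hxt
  have hfg : g = f :=
    linearIndepOn_iffₛ.mp hu g (supported_mono ht hg) f (supported_mono hs hf) hgf
  refine (mem_span_image_iff_linearCombination R).mpr ⟨f, ?_, rfl⟩
  rw [supported_inter]
  exact ⟨hf, hfg ▸ hg⟩

theorem star_mem_span_image_star {R A : Type*} [CommSemiring R] [StarRing R] [AddCommMonoid A]
    [StarAddMonoid A] [Module R A] [StarModule R A] {s : Set A} {x : A}
    (hx : x ∈ Submodule.span R s) : star x ∈ Submodule.span R (star '' s) := by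
  have hmap := Submodule.mem_map_of_mem (f := (starLinearEquiv R (A := A) : A →ₗ⋆[R] A)) hx
  rwa [← Submodule.span_image] at hmap

theorem conjPi_eq_star {m : ℕ} : (conjPi : (Fin m → ℂ) → Fin m → ℂ) = star := rfl

theorem star_inclPi {m : ℕ} (v : Fin m → ℝ) : star (inclPi v) = inclPi v := by
  funext i
  simp [inclPi]

theorem inclPi_mem_span_image_conjPi {m : ℕ} {v : Fin m → ℝ} {s : Set (Fin m → ℂ)}
    (hv : inclPi v ∈ Submodule.span ℂ s) : inclPi v ∈ Submodule.span ℂ (conjPi '' s) := by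
  rw [conjPi_eq_star, ← star_inclPi]
  exact star_mem_span_image_star hv

open Classical in
theorem minimal_decomposition_of_real_point_is_conj_invariant_general (m x : ℕ)
    (X : Set (Fin m → ℂ)) (hXσ : conjPi '' X = X)
    (hX : ∀ s : Finset (Fin m → ℂ), (s : Set (Fin m → ℂ)) ⊆ X → s.card ≤ 2 * x →
      LinearIndependent ℂ (fun w : (s : Set (Fin m → ℂ)) => (w : Fin m → ℂ)))
    (v : Fin m → ℝ) (S : Finset (Fin m → ℂ)) (hSX : (S : Set (Fin m → ℂ)) ⊆ X)
    (hcard : S.card ≤ x)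
    (hv : inclPi v ∈ Submodule.span ℂ (S : Set (Fin m → ℂ)))
    (hmin : ∀ S' : Finset (Fin m → ℂ), S' ⊂ S →
      inclPi v ∉ Submodule.span ℂ (S' : Set (Fin m → ℂ))) :
    S.image conjPi = S := by
  set σS := S.image conjPi
  have hσSX : (σS : Set (Fin m → ℂ)) ⊆ X := by
    rw [Finset.coe_image, ← hXσ]
    exact Set.image_mono hSX
  have hσScard : σS.card ≤ S.card := Finset.card_image_le
  have hindep : LinearIndepOn ℂ id ((S ∪ σS : Finset (Fin m → ℂ)) : Set (Fin m → ℂ)) :=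
    hX _ (by simpa using Set.union_subset hSX hσSX) (by have := S.card_union_le σS; omega)
  have hvσS : inclPi v ∈ Submodule.span ℂ (σS : Set (Fin m → ℂ)) := by
    simpa [σS] using inclPi_mem_span_image_conjPi hv
  have hvinter : inclPi v ∈ Submodule.span ℂ (↑(S ∩ σS) : Set (Fin m → ℂ)) := by
    have hspan := hindep.span_image_inter_eq (s := S) (t := σS) (by simp) (by simp)
    simp only [Set.image_id] at hspan
    rw [Finset.coe_inter, hspan]
    exact ⟨hv, hvσS⟩
  have hSσS : S ⊆ σS := by
    rcases (Finset.inter_subset_left : S ∩ σS ⊆ S).eq_or_ssubset with h | h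
    · exact Finset.inter_eq_left.mp h
    · exact absurd hvinter (hmin _ h)
  exact (Finset.eq_of_subset_of_card_le hSσS hσScard).symm

open Classical in
theorem minimal_decomposition_of_real_point_is_conj_invariant (m x : ℕ)
    (hm : 1 ≤ m) (hx : 1 ≤ x) (X : Set (Fin m → ℂ)) (hXσ : conjPi '' X = X)
    (hX : ∀ s : Finset (Fin m → ℂ), (s : Set (Fin m → ℂ)) ⊆ X → s.card ≤ 2 * x →
      LinearIndependent ℂ (fun w : (s : Set (Fin m → ℂ)) => (w : Fin m → ℂ)))
    (v : Fin m → ℝ) (S : Finset (Fin m → ℂ)) (hSX : (S : Set (Fin m → ℂ)) ⊆ X)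
    (hcard : S.card ≤ x)
    (hv : inclPi v ∈ Submodule.span ℂ (S : Set (Fin m → ℂ)))
    (hmin : ∀ S' : Finset (Fin m → ℂ), S' ⊂ S →
      inclPi v ∉ Submodule.span ℂ (S' : Set (Fin m → ℂ))) :
    S.image conjPi = S :=
  minimal_decomposition_of_real_point_is_conj_invariant_general m x X hXσ hX v S hSX hcard hv hmin
end
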